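/- Let H be a linearly ordered abelian group and β : H × H → ℤ a normalized symmetric 2-cocycle. Equip ℚ_p with its p-adic additive valuation v_p (with value group ℤ) and the cross-section σ(m) = p^m. Then the twisted Hahn series field ℚ_p(t^H,β), with valuation val(f) = (v_p(f.coeff h₀), h₀) for h₀ = min supp(f) and values in ℤ × H ordered by (z,h) ≤ (z',h') iff h < h' or (h = h' and z ≤ z'), is an ω-pseudo complete valued field. -/

import Mathlib

/-- Twisted multiplication on Hahn series. -/
noncomputable def tmul {K H A : Type*} [Field K]
    [AddCommGroup H] [LinearOrder H] [IsOrderedAddMonoid H] [AddCommGroup A]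
    (σ : A → Kˣ) (β : H → H → A) (x y : HahnSeries H K) : HahnSeries H K where
  coeff l := ∑ ij ∈ Finset.addAntidiagonal x.isPWO_support y.isPWO_support l,
      x.coeff ij.1 * y.coeff ij.2 * (σ (-β ij.1 ij.2) : K)
  isPWO_support' := by
    refine Set.IsPWO.mono (x.isPWO_support.add y.isPWO_support) ?_
    intro l hl
    obtain ⟨ij, hij, -⟩ :=
      Finset.exists_ne_zero_of_sum_ne_zero (Function.mem_support.mp hl)
    rw [Finset.addAntidiagonal, Finset.mem_antidiagonal] at hij
    exact Set.mem_add.mpr ⟨ij.1, hij.1, ij.2, hij.2.1, hij.2.2⟩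

/-- The minimum of the support of a nonzero Hahn series. -/
noncomputable def minSupp {K H : Type*} [Field K] [AddCommGroup H] [LinearOrder H] [IsOrderedAddMonoid H]
    (f : HahnSeries H K) (hf : f ≠ 0) : H :=
  f.isWF_support.min (HahnSeries.support_nonempty_iff.mpr hf)

/-- The valuation `val f = (v (f.coeff h₀), h₀)`, `h₀ = min supp f`. -/
noncomputable def tval {K H A : Type*} [Field K] [AddCommGroup H] [LinearOrder H] [IsOrderedAddMonoid H]
    [AddCommGroup A] [LinearOrder A] [IsOrderedAddMonoid A]
    (v : K → WithTop A) (f : HahnSeries H K) (hf : f ≠ 0) : WithTop A × H :=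
  (v (f.coeff (minSupp f hf)), minSupp f hf)

/-- The strict order `(z,h) < (z',h') ↔ h < h' ∨ (h = h' ∧ z < z')` on values. -/
def pLt {A H : Type*} [AddCommGroup A] [LinearOrder A] [IsOrderedAddMonoid A] [AddCommGroup H] [LinearOrder H] [IsOrderedAddMonoid H]
    (p q : WithTop A × H) : Prop :=
  p.2 < q.2 ∨ (p.2 = q.2 ∧ p.1 < q.1)

open Classical in
/-- The valuation extended by `val 0 = ∞`. -/
noncomputable def Val {K H A : Type*} [Field K] [AddCommGroup H] [LinearOrder H] [IsOrderedAddMonoid H]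
    [AddCommGroup A] [LinearOrder A] [IsOrderedAddMonoid A]
    (v : K → WithTop A) (f : HahnSeries H K) : WithTop (WithTop A × H) :=
  if hf : f = 0 then ⊤ else ((tval v f hf : WithTop A × H) : WithTop (WithTop A × H))

/-- Extension of a strict order to `WithTop`, with `⊤` the largest element. -/
def vLt {P : Type*} (lt : P → P → Prop) (x y : WithTop P) : Prop :=
  x ≠ ⊤ ∧ (y = ⊤ ∨ ∃ p q : P, x = (p : WithTop P) ∧ y = (q : WithTop P) ∧ lt p q)

open Classical in
/-- The additive `p`-adic valuation `v_p : ℚ_p → ℤ ∪ {∞}`. -/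
noncomputable def padicVal (p : ℕ) [Fact p.Prime] : ℚ_[p] → WithTop ℤ :=
  fun x => if x = 0 then ⊤ else ((x.valuation : ℤ) : WithTop ℤ)

/-- The cross-section `σ : ℤ → ℚ_pˣ`, `σ m = p^m`. -/
noncomputable def padicSection (p : ℕ) [Fact p.Prime] : ℤ → (ℚ_[p])ˣ :=
  fun m => (Units.mk0 ((p : ℚ_[p]))
    (Nat.cast_ne_zero.mpr (Fact.out : p.Prime).ne_zero)) ^ m

/-!
For a pseudo-Cauchy sequence `(cᵢ)`, ultrametricity gives `val (cⱼ - cᵢ) = val (cᵢ₊₁ - cᵢ)` for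
`i < j`, so the orders `hᵢ` of the consecutive differences increase and the coefficients of `cⱼ`
below `hᵢ` no longer change for `j ≥ i`. If `hᵢ` keeps growing, the series made of these frozen
coefficients is a pseudo-limit. If `hᵢ` settles at `h₀`, the coefficients at `h₀` form a
pseudo-Cauchy sequence in `ℚ_p`; since `|ℚ_p^×| = p^ℤ` their consecutive differences shrink by a
factor `p` at each step, so they converge to some `L`, and `c_M` truncated below `h₀` plus `L t^h₀`
is a pseudo-limit.
-/

open Filter

section PseudoCauchy

variable {L Γ : Type*} [AddCommGroup L] (lt : Γ → Γ → Prop) (w : L → Γ)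

def IsPseudoCauchyFrom (c : ℕ → L) (N : ℕ) : Prop :=
  ∀ i j k, N ≤ i → i < j → j < k → lt (w (c j - c i)) (w (c k - c j))

def IsPseudoCauchy (c : ℕ → L) : Prop :=
  ∃ N, IsPseudoCauchyFrom lt w c N

def IsPseudoLimit (c : ℕ → L) (b : L) : Prop :=
  ∃ N, ∀ i j, N ≤ i → i < j → lt (w (b - c i)) (w (b - c j))

def IsOmegaPseudoComplete : Prop :=
  ∀ c : ℕ → L, IsPseudoCauchy lt w c → ∃ b, IsPseudoLimit lt w c b

variable {lt w}

theorem IsOmegaPseudoComplete.of_lt_iff {Γ' : Type*} {lt' : Γ' → Γ' → Prop} {w' : L → Γ'}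
    (h : ∀ x y, lt' (w' x) (w' y) ↔ lt (w x) (w y)) (hw : IsOmegaPseudoComplete lt w) :
    IsOmegaPseudoComplete lt' w' := by
  simpa only [IsOmegaPseudoComplete, IsPseudoCauchy, IsPseudoCauchyFrom, IsPseudoLimit, h]
    using hw

namespace IsPseudoCauchyFrom

variable {c : ℕ → L} {N : ℕ}

theorem val_sub_eq (hw : ∀ x y, lt (w x) (w y) → w (x + y) = w x)
    (hc : IsPseudoCauchyFrom lt w c N) {i j : ℕ} (hi : N ≤ i) (hij : i < j) :
    w (c j - c i) = w (c (i + 1) - c i) := by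
  induction j, hij using Nat.le_induction with
  | base => rfl
  | succ j hij ih =>
    rw [← ih, ← hw _ _ (hc i j (j + 1) hi hij j.lt_succ_self)]
    congr 1
    abel

theorem lt_val_succ_sub (hw : ∀ x y, lt (w x) (w y) → w (x + y) = w x)
    (hc : IsPseudoCauchyFrom lt w c N) {i j : ℕ} (hi : N ≤ i) (hij : i < j) :
    lt (w (c (i + 1) - c i)) (w (c (j + 1) - c j)) :=
  hc.val_sub_eq hw hi hij ▸ hc i j (j + 1) hi hij j.lt_succ_self

theorem isPseudoLimit (hw : ∀ x y, lt (w x) (w y) → w (x + y) = w x)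
    (hc : IsPseudoCauchyFrom lt w c N) {b : L} {M : ℕ}
    (hb : ∀ i, M ≤ i → w (b - c i) = w (c (i + 1) - c i)) : IsPseudoLimit lt w c b :=
  ⟨max M N, fun i j hi hij => by
    rw [hb i (le_of_max_le_left hi), hb j (le_of_max_le_left (hi.trans hij.le))]
    exact hc.lt_val_succ_sub hw (le_of_max_le_right hi) hij⟩

end IsPseudoCauchyFrom

end PseudoCauchy

section Padic

variable {p : ℕ} [Fact p.Prime]

theorem padicVal_eq_addValuation : padicVal p = Padic.addValuation := by
  ext x
  by_cases hx : x = 0 <;> simp [padicVal, hx]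

theorem Padic.addValuation_lt_addValuation_iff {x y : ℚ_[p]} :
    Padic.addValuation x < Padic.addValuation y ↔ ‖y‖ < ‖x‖ := by
  rcases eq_or_ne x 0 with rfl | hx
  · simp
  rcases eq_or_ne y 0 with rfl | hy
  · simp [Padic.addValuation.apply hx, hx]
  have hp : (1 : ℝ) < p := mod_cast (Fact.out : p.Prime).one_lt
  rw [Padic.addValuation.apply hx, Padic.addValuation.apply hy, WithTop.coe_lt_coe,
    Padic.norm_eq_zpow_neg_valuation hx, Padic.norm_eq_zpow_neg_valuation hy,
    zpow_lt_zpow_iff_right₀ hp, neg_lt_neg_iff]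

theorem Padic.norm_le_mul_inv_of_norm_lt {x y : ℚ_[p]} (h : ‖x‖ < ‖y‖) :
    ‖x‖ ≤ ‖y‖ * (p : ℝ)⁻¹ := by
  have hy : y ≠ 0 := norm_pos_iff.1 ((norm_nonneg x).trans_lt h)
  have hp : (p : ℝ) ≠ 0 := mod_cast (Fact.out : p.Prime).ne_zero
  rw [Padic.norm_eq_zpow_neg_valuation hy] at h ⊢
  rwa [Padic.norm_lt_pow_iff_norm_le_pow_sub_one, zpow_sub_one₀ hp] at h

theorem Padic.isOmegaPseudoComplete_norm :
    IsOmegaPseudoComplete (fun r s : ℝ => s < r) (fun x : ℚ_[p] => ‖x‖) := by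
  rintro c ⟨N, hc⟩
  have hw : ∀ x y : ℚ_[p], ‖y‖ < ‖x‖ → ‖x + y‖ = ‖x‖ := fun x y h => by
    rw [IsUltrametricDist.norm_add_eq_max_of_norm_ne_norm h.ne', max_eq_left h.le]
  set r : ℕ → ℝ := fun i => ‖c (i + 1) - c i‖
  have hp : (1 : ℝ) < p := mod_cast (Fact.out : p.Prime).one_lt
  have hdecay : ∀ n, r (n + N) ≤ r N * (p : ℝ)⁻¹ ^ n := by
    intro n
    induction n with
    | zero => simp
    | succ n ih =>
      calc r (n + 1 + N) ≤ r (n + N) * (p : ℝ)⁻¹ :=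
            Padic.norm_le_mul_inv_of_norm_lt (hc.lt_val_succ_sub hw (by omega) (by omega))
        _ ≤ r N * (p : ℝ)⁻¹ ^ (n + 1) := by
            rw [pow_succ, ← mul_assoc]
            gcongr
  have hcauchy : CauchySeq c := by
    refine NonarchimedeanAddGroup.cauchySeq_of_tendsto_sub_nhds_zero
      ((tendsto_add_atTop_iff_nat N).1 (squeeze_zero_norm hdecay ?_))
    simpa using (tendsto_pow_atTop_nhds_zero_of_lt_one (by positivity)
      (inv_lt_one_of_one_lt₀ hp)).const_mul (r N)
  obtain ⟨b, hb⟩ := cauchySeq_tendsto_of_complete hcauchy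
  refine ⟨b, hc.isPseudoLimit hw (M := N) fun i hi => ?_⟩
  refine tendsto_nhds_unique (hb.sub_const (c i)).norm (tendsto_const_nhds.congr' ?_)
  filter_upwards [eventually_gt_atTop i] with j hj using (hc.val_sub_eq hw hi hj).symm

theorem Padic.isOmegaPseudoComplete_addValuation :
    IsOmegaPseudoComplete (· < ·) (Padic.addValuation : ℚ_[p] → WithTop ℤ) :=
  Padic.isOmegaPseudoComplete_norm.of_lt_iff fun _ _ => Padic.addValuation_lt_addValuation_iff

end Padic

theorem vLt_coe_iff {P : Type*} (lt : P → P → Prop) (a b : P) :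
    vLt lt (a : WithTop P) (b : WithTop P) ↔ lt a b := by
  simp [vLt]

namespace HahnSeries

theorem exists_coeff_eq_of_compatible {ι Γ R : Type*} [LinearOrder Γ] [Zero R]
    (f : ι → HahnSeries Γ R) (g : ι → Γ)
    (hfg : ∀ i j x, x < g i → x < g j → (f i).coeff x = (f j).coeff x) :
    ∃ b : HahnSeries Γ R, ∀ i x, x < g i → b.coeff x = (f i).coeff x := by
  classical
  let F : Γ → R := fun x => if h : ∃ i, x < g i then (f h.choose).coeff x else 0
  have hF : ∀ i x, x < g i → F x = (f i).coeff x := fun i x hx => by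
    have h : ∃ i, x < g i := ⟨i, hx⟩
    simp only [F, dif_pos h]
    exact hfg _ _ _ h.choose_spec hx
  -- a descending sequence in the support of `F` lies below some `g i`, so in the support of `f i`
  refine ⟨⟨F, Set.IsWF.isPWO (Set.isWF_iff_no_descending_seq.2 fun u hu hmem => ?_)⟩, hF⟩
  obtain ⟨i, hi⟩ : ∃ i, u 0 < g i := by
    by_contra h
    exact hmem 0 (dif_neg h)
  refine Set.isWF_iff_no_descending_seq.1 (f i).isWF_support u hu fun n => ?_
  have hn : F (u n) ≠ 0 := hmem n
  rwa [hF i _ ((hu.antitone n.zero_le).trans_lt hi)] at hn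

variable {K H A : Type*} [Field K] [AddCommGroup H] [LinearOrder H] [IsOrderedAddMonoid H]
  [AddCommGroup A] [LinearOrder A] [IsOrderedAddMonoid A]

theorem val_eq_top_iff {v : K → WithTop A} {f : HahnSeries H K} : Val v f = ⊤ ↔ f = 0 := by
  by_cases hf : f = 0 <;> simp [Val, hf]

theorem val_of_ne_zero (v : K → WithTop A) {f : HahnSeries H K} (hf : f ≠ 0) :
    Val v f = ↑(v f.leadingCoeff, f.order) := by
  simp [Val, hf, tval, minSupp, order_of_ne hf, leadingCoeff_eq]

theorem val_eq_of_coeff (v : K → WithTop A) {f : HahnSeries H K} {i : H} (hi : f.coeff i ≠ 0)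
    (hlt : ∀ j < i, f.coeff j = 0) : Val v f = ↑(v (f.coeff i), i) := by
  have hord : f.order = i := le_antisymm (order_le_of_coeff_ne_zero hi) <|
    not_lt.1 fun h => coeff_order_eq_zero.not.2 (ne_zero_of_coeff_ne_zero hi) (hlt _ h)
  rw [val_of_ne_zero v (ne_zero_of_coeff_ne_zero hi), leadingCoeff_eq, hord]

theorem val_congr (v : K → WithTop A) {f g : HahnSeries H K} (hf : f ≠ 0)
    (h : ∀ i ≤ f.order, g.coeff i = f.coeff i) : Val v g = Val v f := by
  have hne : g.coeff f.order ≠ 0 := by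
    rw [h _ le_rfl]
    exact coeff_order_eq_zero.not.2 hf
  rw [val_eq_of_coeff v hne fun j hj => by rw [h j hj.le, coeff_eq_zero_of_lt_order hj],
    val_of_ne_zero v hf, leadingCoeff_eq, h _ le_rfl]

theorem val_add_eq_left (v : AddValuation K (WithTop A)) (f g : HahnSeries H K)
    (h : vLt pLt (Val v f) (Val v g)) : Val v (f + g) = Val v f := by
  have hf : f ≠ 0 := fun hf => h.1 (val_eq_top_iff.2 hf)
  rcases eq_or_ne g 0 with rfl | hg
  · rw [add_zero]
  rw [val_of_ne_zero v hf, val_of_ne_zero v hg, vLt_coe_iff] at h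
  have hle : f.order ≤ g.order := h.elim le_of_lt fun h => h.1.le
  have hv : v ((f + g).coeff f.order) = v f.leadingCoeff := by
    rw [coeff_add, ← leadingCoeff_eq]
    rcases h with h | ⟨h, hlt⟩
    · rw [coeff_eq_zero_of_lt_order h, add_zero]
    · rw [show f.order = g.order from h, ← leadingCoeff_eq]
      exact v.map_add_eq_of_lt_left hlt
  have hne : (f + g).coeff f.order ≠ 0 := by
    rw [← v.ne_top_iff, hv, v.ne_top_iff, leadingCoeff_ne_zero]
    exact hf
  rw [val_eq_of_coeff v hne fun j hj => ?_, hv, val_of_ne_zero v hf]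
  rw [coeff_add, coeff_eq_zero_of_lt_order hj, coeff_eq_zero_of_lt_order (hj.trans_le hle),
    add_zero]

end HahnSeries

namespace IsPseudoCauchyFrom

open HahnSeries

variable {K H A : Type*} [Field K] [AddCommGroup H] [LinearOrder H] [IsOrderedAddMonoid H]
  [AddCommGroup A] [LinearOrder A] [IsOrderedAddMonoid A]
  {v : AddValuation K (WithTop A)} {c : ℕ → HahnSeries H K} {N : ℕ} {i j : ℕ}

theorem sub_ne_zero (hc : IsPseudoCauchyFrom (vLt pLt) (Val v) c N) (hi : N ≤ i)
    (hij : i < j) : c j - c i ≠ 0 := fun h =>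
  (hc i j (j + 1) hi hij j.lt_succ_self).1 (val_eq_top_iff.2 h)

theorem order_sub_eq (hc : IsPseudoCauchyFrom (vLt pLt) (Val v) c N) (hi : N ≤ i)
    (hij : i < j) : (c j - c i).order = (c (i + 1) - c i).order := by
  have h := hc.val_sub_eq (val_add_eq_left v) hi hij
  rw [val_of_ne_zero v (hc.sub_ne_zero hi hij),
    val_of_ne_zero v (hc.sub_ne_zero hi i.lt_succ_self), WithTop.coe_inj] at h
  exact congrArg Prod.snd h

theorem coeff_eq_of_lt_order (hc : IsPseudoCauchyFrom (vLt pLt) (Val v) c N) (hi : N ≤ i)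
    (hij : i ≤ j) {x : H} (hx : x < (c (i + 1) - c i).order) : (c j).coeff x = (c i).coeff x := by
  rcases hij.eq_or_lt with rfl | hij
  · rfl
  rw [← sub_eq_zero, ← coeff_sub]
  exact coeff_eq_zero_of_lt_order (hc.order_sub_eq hi hij ▸ hx)

theorem order_le_order (hc : IsPseudoCauchyFrom (vLt pLt) (Val v) c N) (hi : N ≤ i)
    (hij : i ≤ j) : (c (i + 1) - c i).order ≤ (c (j + 1) - c j).order := by
  rcases hij.eq_or_lt with rfl | hij
  · rfl
  have h := hc.lt_val_succ_sub (val_add_eq_left v) hi hij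
  rw [val_of_ne_zero v (hc.sub_ne_zero hi i.lt_succ_self),
    val_of_ne_zero v (hc.sub_ne_zero (hi.trans hij.le) j.lt_succ_self), vLt_coe_iff] at h
  exact h.elim le_of_lt fun h => h.1.le

theorem exists_isPseudoLimit_of_order_eq (hK : IsOmegaPseudoComplete (· < ·) v)
    (hc : IsPseudoCauchyFrom (vLt pLt) (Val v) c N) {M : ℕ} (hM : N ≤ M)
    (hconst : ∀ j, M ≤ j → (c (j + 1) - c j).order = (c (M + 1) - c M).order) :
    ∃ b, IsPseudoLimit (vLt pLt) (Val v) c b := by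
  set h₀ := (c (M + 1) - c M).order
  have hval : ∀ i j, M ≤ i → i < j →
      Val v (c j - c i) = ↑(v ((c j).coeff h₀ - (c i).coeff h₀), h₀) := fun i j hi hij => by
    rw [val_of_ne_zero v (hc.sub_ne_zero (hM.trans hi) hij), leadingCoeff_eq,
      hc.order_sub_eq (hM.trans hi) hij, hconst i hi, coeff_sub]
  obtain ⟨L, N', hL⟩ := hK (fun i => (c i).coeff h₀) ⟨M, fun i j k hi hij hjk => by
    have h := hc i j k (hM.trans hi) hij hjk
    rw [hval i j hi hij, hval j k (hi.trans hij.le) hjk, vLt_coe_iff] at h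
    exact h.resolve_left (lt_irrefl _) |>.2⟩
  have hval_limit : ∀ i, max M N' ≤ i →
      Val v (truncLT h₀ (c M) + single h₀ L - c i) = ↑(v (L - (c i).coeff h₀), h₀) := by
    intro i hi
    have hne : L - (c i).coeff h₀ ≠ 0 := by
      rw [← v.ne_top_iff]
      exact (hL i (i + 1) (le_of_max_le_right hi) i.lt_succ_self).ne_top
    refine (val_eq_of_coeff v (i := h₀) (by simpa using hne) fun x hx => ?_).trans (by simp)
    simp [HahnSeries.coeff_truncLT, hx, hx.ne,
      hc.coeff_eq_of_lt_order hM (le_of_max_le_left hi) hx]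
  refine ⟨truncLT h₀ (c M) + single h₀ L, max M N', fun i j hi hij => ?_⟩
  rw [hval_limit i hi, hval_limit j (hi.trans hij.le), vLt_coe_iff]
  exact Or.inr ⟨rfl, hL i j (le_of_max_le_right hi) hij⟩

theorem exists_isPseudoLimit_of_exists_order_lt
    (hc : IsPseudoCauchyFrom (vLt pLt) (Val v) c N)
    (hgrow : ∀ i, N ≤ i → ∃ k, i < k ∧ (c (i + 1) - c i).order < (c (k + 1) - c k).order) :
    ∃ b, IsPseudoLimit (vLt pLt) (Val v) c b := by
  obtain ⟨b, hb⟩ := exists_coeff_eq_of_compatible (fun i : {i // N ≤ i} => c i)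
    (fun i => (c (i + 1) - c i).order) fun i j x hi hj => by
      rcases le_total i j with h | h
      exacts [(hc.coeff_eq_of_lt_order i.2 h hi).symm, hc.coeff_eq_of_lt_order j.2 h hj]
  refine ⟨b, hc.isPseudoLimit (val_add_eq_left v) (M := N) fun i hi => ?_⟩
  obtain ⟨k, hik, hlt⟩ := hgrow i hi
  rw [← hc.val_sub_eq (val_add_eq_left v) hi hik]
  refine val_congr v (hc.sub_ne_zero hi hik) fun x hx => ?_
  rw [coeff_sub, coeff_sub,
    hb ⟨k, hi.trans hik.le⟩ x (hx.trans_lt (hc.order_sub_eq hi hik ▸ hlt))]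

end IsPseudoCauchyFrom

theorem HahnSeries.isOmegaPseudoComplete_val {K H A : Type*} [Field K] [AddCommGroup H]
    [LinearOrder H] [IsOrderedAddMonoid H] [AddCommGroup A] [LinearOrder A] [IsOrderedAddMonoid A]
    (v : AddValuation K (WithTop A)) (hK : IsOmegaPseudoComplete (· < ·) v) :
    IsOmegaPseudoComplete (vLt pLt) (Val (H := H) v) := by
  rintro c ⟨N, hc⟩
  by_cases hstable : ∃ M, N ≤ M ∧ ∀ j, M ≤ j → (c (j + 1) - c j).order = (c (M + 1) - c M).order
  · obtain ⟨M, hM, hconst⟩ := hstable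
    exact hc.exists_isPseudoLimit_of_order_eq hK hM hconst
  push Not at hstable
  refine hc.exists_isPseudoLimit_of_exists_order_lt fun i hi => ?_
  obtain ⟨k, hik, hne⟩ := hstable i hi
  exact ⟨k, hik.lt_of_ne (by rintro rfl; exact hne rfl),
    (hc.order_le_order hi hik).lt_of_ne hne.symm⟩

theorem padic_twisted_hahn_series_pseudo_complete_general
    (p : ℕ) [Fact p.Prime]
    {H : Type*} [AddCommGroup H] [LinearOrder H] [IsOrderedAddMonoid H] :
    ∀ c : ℕ → HahnSeries H ℚ_[p],
      (∃ N : ℕ, ∀ i j k : ℕ, N ≤ i → i < j → j < k →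
        vLt pLt (Val (padicVal p) (c j - c i)) (Val (padicVal p) (c k - c j))) →
      ∃ b : HahnSeries H ℚ_[p], ∃ N : ℕ, ∀ i j : ℕ, N ≤ i → i < j →
        vLt pLt (Val (padicVal p) (b - c i)) (Val (padicVal p) (b - c j)) := by
  rw [padicVal_eq_addValuation]
  exact HahnSeries.isOmegaPseudoComplete_val _ Padic.isOmegaPseudoComplete_addValuation

/-- For a linearly ordered abelian group `H` and a normalized
symmetric 2-cocycle `β : H × H → ℤ`, the twisted Hahn series field
`ℚ_p(t^H, β)` (with cross-section `σ m = p^m` and the valuation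
`val f = (v_p (f.coeff h₀), h₀)`, `h₀ = min supp f`, valued in `ℤ × H` with the
order `(z,h) ≤ (z',h') ↔ h < h' ∨ (h = h' ∧ z ≤ z')`) is an ω-pseudo complete
valued field. -/
theorem padic_twisted_hahn_series_pseudo_complete
    (p : ℕ) [Fact p.Prime]
    {H : Type*} [AddCommGroup H] [LinearOrder H] [IsOrderedAddMonoid H]
    (β : H → H → ℤ)
    (hβsymm : ∀ h h' : H, β h h' = β h' h)
    (hβnorm : ∀ h : H, β h 0 = 0 ∧ β 0 h = 0)
    (hβcoc : ∀ h h' h'' : H, β h h' + β (h + h') h'' = β h' h'' + β h (h' + h'')) :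
    ∀ c : ℕ → HahnSeries H ℚ_[p],
      (∃ N : ℕ, ∀ i j k : ℕ, N ≤ i → i < j → j < k →
        vLt pLt (Val (padicVal p) (c j - c i)) (Val (padicVal p) (c k - c j))) →
      ∃ b : HahnSeries H ℚ_[p], ∃ N : ℕ, ∀ i j : ℕ, N ≤ i → i < j →
        vLt pLt (Val (padicVal p) (b - c i)) (Val (padicVal p) (b - c j)) :=
  padic_twisted_hahn_series_pseudo_complete_general p
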